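/- arXiv:1412.1181 — 3 statements merged into one kernel-verified Lean document; each statement's English description precedes it below -/
import Mathlib

section
/- Define the semi-partial correlation coefficients ρ_{ij(1,...,i-1)} = (R_{ij} - ρ_i^{*j} R_{i-1}^{-1} ρ_i^T)/sqrt(1 - ρ_i R_{i-1}^{-1} ρ_i^T) for j ≥ i. Then for all i ≥ 1 and j ≥ i+1: ρ_{i+1}^{*j} R_i^{-1} ρ_{i+1}^T = Σ_{k=1}^{i} ρ_{k,i+1(1,...,k-1)} · ρ_{kj(1,...,k-1)}. -/
open Matrix

/-- Leading `i × i` principal submatrix. -/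
def lead {n : ℕ} (R : Matrix (Fin n) (Fin n) ℝ) (i : ℕ) (h : i ≤ n) :
    Matrix (Fin i) (Fin i) ℝ :=
  R.submatrix (Fin.castLE h) (Fin.castLE h)

/-- First `i` entries of column `j` of `R`. -/
def colv {n : ℕ} (R : Matrix (Fin n) (Fin n) ℝ) (i : ℕ) (h : i ≤ n) (j : Fin n) :
    Fin i → ℝ :=
  fun k => R (Fin.castLE h k) j


/-- The semi-partial correlation coefficient `ρ_{k+1,j(1,…,k)}` (0-indexed `k`,
0-indexed column `j`):
`(R_{kj} − ρ_k^{*j} R_{k−1}⁻¹ ρ_kᵀ)/√(1 − ρ_k R_{k−1}⁻¹ ρ_kᵀ)`. -/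
noncomputable def spc {n : ℕ} (R : Matrix (Fin n) (Fin n) ℝ) (k : ℕ) (hk : k < n)
    (j : Fin n) : ℝ :=
  (R ⟨k, hk⟩ j - colv R k hk.le j ⬝ᵥ (lead R k hk.le)⁻¹ *ᵥ colv R k hk.le ⟨k, hk⟩) /
    Real.sqrt
      (1 - colv R k hk.le ⟨k, hk⟩ ⬝ᵥ (lead R k hk.le)⁻¹ *ᵥ colv R k hk.le ⟨k, hk⟩)

/-!
Border the leading block `A = R_i` by the next column `ρ` and the diagonal entry `1`. With the
Schur complement `s = 1 - ρᵀ A⁻¹ ρ > 0`, the inverse of the bordered matrix is `A⁻¹` plus the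
rank-one correction `v vᵀ / s`, where `v = (-A⁻¹ ρ, 1)`. Hence the bilinear form
`xᵀ R_{i+1}⁻¹ y` exceeds `x'ᵀ R_i⁻¹ y'` by `(x_i - x'ᵀ A⁻¹ ρ)(y_i - y'ᵀ A⁻¹ ρ) / s`, which is
the product of two semi-partial correlations; summing over `i` gives the identity.
-/

lemma snoc_dotProduct_snoc {α : Type*} [NonUnitalNonAssocSemiring α] {k : ℕ}
    (X Y : Fin k → α) (a b : α) :
    (Fin.snoc X a : Fin (k + 1) → α) ⬝ᵥ Fin.snoc Y b = X ⬝ᵥ Y + a * b := by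
  simp [dotProduct, Fin.sum_univ_castSucc]

lemma snoc_add_smul_snoc_zero {α : Type*} [Semiring α] {k : ℕ} (Y : Fin k → α) (r c s : α) :
    (Fin.snoc Y r : Fin (k + 1) → α) + c • Fin.snoc 0 s = Fin.snoc Y (r + c * s) := by
  ext a
  induction a using Fin.lastCases <;> simp

lemma dotProduct_mulVec_comm {α m : Type*} [CommSemiring α] [Fintype m] {S : Matrix m m α}
    (hS : S.IsSymm) (x y : m → α) : x ⬝ᵥ S *ᵥ y = y ⬝ᵥ S *ᵥ x := by
  rw [dotProduct_mulVec, ← mulVec_transpose, hS.eq, dotProduct_comm]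

section Bordered

variable {K : Type*} [Field K] {k : ℕ} (M : Matrix (Fin (k + 1)) (Fin (k + 1)) K)

def leadingBlock : Matrix (Fin k) (Fin k) K := M.submatrix Fin.castSucc Fin.castSucc

def borderCol : Fin k → K := fun a => M a.castSucc (Fin.last k)

def borderRow : Fin k → K := fun b => M (Fin.last k) b.castSucc

noncomputable def borderSchur : K :=
  M (Fin.last k) (Fin.last k) - borderRow M ⬝ᵥ (leadingBlock M)⁻¹ *ᵥ borderCol M

lemma mulVec_snoc (X : Fin k → K) (c : K) :
    M *ᵥ Fin.snoc X c = Fin.snoc (leadingBlock M *ᵥ X + c • borderCol M)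
      (borderRow M ⬝ᵥ X + M (Fin.last k) (Fin.last k) * c) := by
  ext a
  induction a using Fin.lastCases <;>
    simp [mulVec, dotProduct, Fin.sum_univ_castSucc, leadingBlock, borderCol, borderRow,
      mul_comm]

variable {M}

lemma mulVec_snoc_inv_mulVec (hA : IsUnit (leadingBlock M).det) (Y : Fin k → K) :
    M *ᵥ Fin.snoc ((leadingBlock M)⁻¹ *ᵥ Y) 0 =
      Fin.snoc Y (borderRow M ⬝ᵥ (leadingBlock M)⁻¹ *ᵥ Y) := by
  simp [mulVec_snoc, mulVec_mulVec, mul_nonsing_inv _ hA]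

lemma mulVec_snoc_neg_inv_mulVec_borderCol (hA : IsUnit (leadingBlock M).det) :
    M *ᵥ Fin.snoc (-((leadingBlock M)⁻¹ *ᵥ borderCol M)) 1 = Fin.snoc 0 (borderSchur M) := by
  simp [mulVec_snoc, mulVec_neg, mulVec_mulVec, mul_nonsing_inv _ hA, borderSchur,
    dotProduct_neg, sub_eq_neg_add]


lemma mulVec_inv_mulVec_snoc_add_smul (hA : IsUnit (leadingBlock M).det) (hs : borderSchur M ≠ 0)
    (Y : Fin k → K) (b : K) :
    M *ᵥ (Fin.snoc ((leadingBlock M)⁻¹ *ᵥ Y) 0 +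
      ((b - borderRow M ⬝ᵥ (leadingBlock M)⁻¹ *ᵥ Y) / borderSchur M) •
        Fin.snoc (-((leadingBlock M)⁻¹ *ᵥ borderCol M)) 1) = Fin.snoc Y b := by
  rw [mulVec_add, mulVec_smul, mulVec_snoc_inv_mulVec hA,
    mulVec_snoc_neg_inv_mulVec_borderCol hA, snoc_add_smul_snoc_zero, div_mul_cancel₀ _ hs,
    add_sub_cancel]

lemma inv_mulVec_snoc (hA : IsUnit (leadingBlock M).det) (hs : borderSchur M ≠ 0)
    (Y : Fin k → K) (b : K) :
    M⁻¹ *ᵥ Fin.snoc Y b = Fin.snoc ((leadingBlock M)⁻¹ *ᵥ Y) 0 +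
      ((b - borderRow M ⬝ᵥ (leadingBlock M)⁻¹ *ᵥ Y) / borderSchur M) •
        Fin.snoc (-((leadingBlock M)⁻¹ *ᵥ borderCol M)) 1 := by
  have hM : IsUnit M.det := (isUnit_iff_isUnit_det M).1 <| mulVec_surjective_iff_isUnit.1
    fun y => ⟨_, (mulVec_inv_mulVec_snoc_add_smul hA hs (Fin.init y) (y (Fin.last k))).trans
      (Fin.snoc_init_self y)⟩
  rw [← mulVec_inv_mulVec_snoc_add_smul hA hs Y b, mulVec_mulVec, nonsing_inv_mul _ hM,
    one_mulVec]

lemma snoc_dotProduct_inv_mulVec_snoc (hA : IsUnit (leadingBlock M).det)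
    (hs : borderSchur M ≠ 0) (X Y : Fin k → K) (a b : K) :
    Fin.snoc X a ⬝ᵥ M⁻¹ *ᵥ Fin.snoc Y b = X ⬝ᵥ (leadingBlock M)⁻¹ *ᵥ Y +
      (a - X ⬝ᵥ (leadingBlock M)⁻¹ *ᵥ borderCol M) *
        (b - borderRow M ⬝ᵥ (leadingBlock M)⁻¹ *ᵥ Y) / borderSchur M := by
  rw [inv_mulVec_snoc hA hs, dotProduct_add, dotProduct_smul, snoc_dotProduct_snoc,
    snoc_dotProduct_snoc, dotProduct_neg, smul_eq_mul]
  ring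

variable [PartialOrder K] [StarRing K]

lemma Matrix.PosDef.isUnit_det_leadingBlock (hM : M.PosDef) : IsUnit (leadingBlock M).det :=
  (isUnit_iff_isUnit_det _).1 (hM.submatrix (Fin.castSucc_injective k)).isUnit

lemma Matrix.PosDef.borderSchur_pos (hM : M.PosDef) : 0 < borderSchur M := by
  set v : Fin (k + 1) → K := Fin.snoc (-((leadingBlock M)⁻¹ *ᵥ borderCol M)) 1
  have hv : v ≠ 0 := fun h => by simpa [v] using congrFun h (Fin.last k)
  simpa [v, mulVec_snoc_neg_inv_mulVec_borderCol hM.isUnit_det_leadingBlock, dotProduct,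
    Fin.sum_univ_castSucc] using hM.dotProduct_mulVec_pos hv

end Bordered

variable {n : ℕ} {R : Matrix (Fin n) (Fin n) ℝ}

lemma posDef_lead (hR : R.PosDef) (i : ℕ) (h : i ≤ n) : (lead R i h).PosDef :=
  hR.submatrix (Fin.castLE_injective h)

lemma isSymm_lead (hR : R.IsSymm) (i : ℕ) (h : i ≤ n) : (lead R i h).IsSymm :=
  hR.submatrix _

lemma colv_succ (i : ℕ) (hi : i < n) (j : Fin n) :
    colv R (i + 1) hi j = Fin.snoc (colv R i hi.le j) (R ⟨i, hi⟩ j) := by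
  ext a
  induction a using Fin.lastCases
  · rw [Fin.snoc_last]; rfl
  · rw [Fin.snoc_castSucc]; rfl

lemma leadingBlock_lead (i : ℕ) (hi : i < n) :
    leadingBlock (lead R (i + 1) hi) = lead R i hi.le := rfl

lemma borderCol_lead (i : ℕ) (hi : i < n) :
    borderCol (lead R (i + 1) hi) = colv R i hi.le ⟨i, hi⟩ := rfl

lemma borderRow_lead (hR : R.IsSymm) (i : ℕ) (hi : i < n) :
    borderRow (lead R (i + 1) hi) = colv R i hi.le ⟨i, hi⟩ :=
  funext fun _ => hR.apply _ _

lemma borderSchur_lead (hR : R.IsSymm) (hdiag : ∀ k, R k k = 1) (i : ℕ) (hi : i < n) :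
    borderSchur (lead R (i + 1) hi) =
      1 - colv R i hi.le ⟨i, hi⟩ ⬝ᵥ (lead R i hi.le)⁻¹ *ᵥ colv R i hi.le ⟨i, hi⟩ := by
  rw [borderSchur, leadingBlock_lead, borderCol_lead, borderRow_lead hR]
  exact congrArg (· - _) (hdiag _)

lemma spc_eq (hR : R.IsSymm) (hdiag : ∀ k, R k k = 1) (i : ℕ) (hi : i < n) (j : Fin n) :
    spc R i hi j =
      (R ⟨i, hi⟩ j - colv R i hi.le j ⬝ᵥ (lead R i hi.le)⁻¹ *ᵥ colv R i hi.le ⟨i, hi⟩) /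
        √(borderSchur (lead R (i + 1) hi)) := by
  rw [spc, borderSchur_lead hR hdiag]

lemma colv_dotProduct_inv_mulVec_succ (hR : R.PosDef) (hdiag : ∀ k, R k k = 1) (i : ℕ)
    (hi : i < n) (x y : Fin n) :
    colv R (i + 1) hi x ⬝ᵥ (lead R (i + 1) hi)⁻¹ *ᵥ colv R (i + 1) hi y =
      colv R i hi.le x ⬝ᵥ (lead R i hi.le)⁻¹ *ᵥ colv R i hi.le y +
        spc R i hi x * spc R i hi y := by
  have hsymm : R.IsSymm := IsSymm.ext fun a b => hR.isHermitian.apply a b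
  have hpos := posDef_lead hR (i + 1) hi
  rw [colv_succ, colv_succ,
    snoc_dotProduct_inv_mulVec_snoc hpos.isUnit_det_leadingBlock hpos.borderSchur_pos.ne',
    leadingBlock_lead, borderCol_lead, borderRow_lead hsymm,
    dotProduct_mulVec_comm (isSymm_lead hsymm i hi.le).inv (colv R i hi.le ⟨i, hi⟩),
    spc_eq hsymm hdiag, spc_eq hsymm hdiag, div_mul_div_comm,
    Real.mul_self_sqrt hpos.borderSchur_pos.le]

lemma colv_dotProduct_inv_mulVec_eq_sum (hR : R.PosDef) (hdiag : ∀ k, R k k = 1) (i : ℕ)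
    (hi : i ≤ n) (x y : Fin n) :
    colv R i hi x ⬝ᵥ (lead R i hi)⁻¹ *ᵥ colv R i hi y =
      ∑ k : Fin i, spc R k (k.isLt.trans_le hi) x * spc R k (k.isLt.trans_le hi) y := by
  induction i with
  | zero => simp
  | succ i ih =>
    rw [colv_dotProduct_inv_mulVec_succ hR hdiag i hi, ih, Fin.sum_univ_castSucc]
    rfl

/-- Indices are 0-based: `m` is the paper's `i`, and column `⟨m, hm⟩` is the paper's
column `i + 1`. -/
theorem stmt4_general {n : ℕ} (R : Matrix (Fin n) (Fin n) ℝ) (hR : R.PosDef)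
    (hdiag : ∀ k, R k k = 1) (m : ℕ) (hm : m < n) (jf : Fin n) :
    colv R m hm.le jf ⬝ᵥ (lead R m hm.le)⁻¹ *ᵥ colv R m hm.le ⟨m, hm⟩ =
      ∑ k : Fin m, spc R k (k.isLt.trans hm) ⟨m, hm⟩ * spc R k (k.isLt.trans hm) jf := by
  simp only [colv_dotProduct_inv_mulVec_eq_sum hR hdiag, mul_comm]

/-- Theorem 1 of the paper: `ρ_{i+1}^{*j} R_i⁻¹ ρ_{i+1}ᵀ =
Σ_{k=1}^{i} ρ_{k,i+1(1,…,k−1)} · ρ_{k,j(1,…,k−1)}`.  Here `m` is the paper's `i`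
(so `1 ≤ m`), the 0-indexed column `⟨m⟩` is the paper's column `i+1`, and
`j ≥ i + 1` becomes `m ≤ jf`. -/
theorem stmt4 {n : ℕ} (R : Matrix (Fin n) (Fin n) ℝ) (hR : R.PosDef)
    (hdiag : ∀ k, R k k = 1) (m : ℕ) (hm : m < n) (hm1 : 1 ≤ m) (jf : Fin n)
    (hj : m ≤ (jf : ℕ)) :
    colv R m hm.le jf ⬝ᵥ (lead R m hm.le)⁻¹ *ᵥ colv R m hm.le ⟨m, hm⟩ =
      ∑ k : Fin m, spc R k (k.isLt.trans hm) ⟨m, hm⟩ * spc R k (k.isLt.trans hm) jf :=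
  stmt4_general R hR hdiag m hm jf
end

section
/- For a symmetric positive-definite correlation matrix R and each fixed j with 2 ≤ j ≤ n, the ratios of bordered determinants are nonincreasing: 1 ≥ det(R_2^{*j}) ≥ det(R_3^{*j})/det(R_2) ≥ ... ≥ det(R_{j-1}^{*j})/det(R_{j-2}) ≥ det(R_j)/det(R_{j-1}) > 0. -/
open Matrix

/-- The bordered matrix `R_{i+1}^{*j}` (0-indexed size parameter `i`):
`[[R_i, (ρ_{i+1}^{*j})ᵀ], [ρ_{i+1}^{*j}, 1]]`, i.e. the leading `i × i`
submatrix bordered by the first `i` entries of column `j` with corner `1`. -/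
def brd {n : ℕ} (R : Matrix (Fin n) (Fin n) ℝ) (i : ℕ) (h : i ≤ n) (j : Fin n) :
    Matrix (Fin (i + 1)) (Fin (i + 1)) ℝ :=
  Matrix.of fun k l =>
    if hk : (k : ℕ) < i then
      if hl : (l : ℕ) < i then R ⟨k, lt_of_lt_of_le hk h⟩ ⟨l, lt_of_lt_of_le hl h⟩
      else R ⟨k, lt_of_lt_of_le hk h⟩ j
    else if hl : (l : ℕ) < i then R ⟨l, lt_of_lt_of_le hl h⟩ j
    else 1

/-! By the Schur complement, `det(R_i^{*j}) / det(R_{i-1}) = 1 - ρᵀ R_{i-1}⁻¹ ρ` with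
`ρ = ρ_i^{*j}`. For positive definite `A`, `ρᵀ A⁻¹ ρ = max_x (2 xᵀρ - xᵀ A x)`, and passing to a
principal submatrix restricts this maximum to vectors supported on its indices, so the subtracted
term grows with `i`. The ratio is `1` at `i = 1`, and the unit diagonal makes `R_j^{*j} = R_j`, so
the last ratio is `det(R_j) / det(R_{j-1}) > 0`. -/

open Function

lemma extend_zero_dotProduct {ι κ : Type*} [Fintype ι] [Fintype κ] {e : ι → κ}
    (he : Injective e) (w : ι → ℝ) (v : κ → ℝ) :
    extend e w 0 ⬝ᵥ v = w ⬝ᵥ (v ∘ e) :=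
  (Fintype.sum_of_injective e he _ _ (fun i hi => by simp [extend_apply' _ _ _ hi])
    (fun k => by simp [he.extend_apply])).symm

lemma extend_zero_dotProduct_mulVec {ι κ : Type*} [Fintype ι] [Fintype κ] {e : ι → κ}
    (he : Injective e) (w : ι → ℝ) (A : Matrix κ κ ℝ) :
    extend e w 0 ⬝ᵥ A *ᵥ extend e w 0 = w ⬝ᵥ A.submatrix e e *ᵥ w := by
  rw [extend_zero_dotProduct he]
  congr 1
  ext k
  change A (e k) ⬝ᵥ extend e w 0 = _
  rw [dotProduct_comm, extend_zero_dotProduct he, dotProduct_comm]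
  rfl

namespace Matrix.PosDef

variable {ι κ : Type*} [Fintype ι] [Fintype κ] [DecidableEq ι] [DecidableEq κ]

-- Completing the square: the difference is `(x - A⁻¹ρ)ᵀ A (x - A⁻¹ρ) ≥ 0`.
lemma two_mul_dotProduct_sub_le {A : Matrix ι ι ℝ} (hA : A.PosDef) (ρ x : ι → ℝ) :
    2 * (x ⬝ᵥ ρ) - x ⬝ᵥ A *ᵥ x ≤ ρ ⬝ᵥ A⁻¹ *ᵥ ρ := by
  set w := A⁻¹ *ᵥ ρ
  have hAw : A *ᵥ w = ρ := by
    rw [mulVec_mulVec, mul_nonsing_inv _ ((isUnit_iff_isUnit_det A).mp hA.isUnit), one_mulVec]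
  have hsymm : w ⬝ᵥ A *ᵥ x = x ⬝ᵥ ρ := by
    rw [dotProduct_mulVec, ← mulVec_transpose, ← conjTranspose_eq_transpose_of_trivial,
      hA.isHermitian.eq, hAw, dotProduct_comm]
  have hnonneg : 0 ≤ (x - w) ⬝ᵥ A *ᵥ (x - w) := hA.posSemidef.dotProduct_mulVec_nonneg _
  rw [mulVec_sub, dotProduct_sub, sub_dotProduct, sub_dotProduct, hAw, hsymm,
    dotProduct_comm w ρ] at hnonneg
  linarith

-- Test the maximization for `A` at the extension by zero of the maximizer for the submatrix.
lemma dotProduct_inv_mulVec_submatrix_le {A : Matrix κ κ ℝ} (hA : A.PosDef) {e : ι → κ}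
    (he : Injective e) (ρ : κ → ℝ) :
    (ρ ∘ e) ⬝ᵥ (A.submatrix e e)⁻¹ *ᵥ (ρ ∘ e) ≤ ρ ⬝ᵥ A⁻¹ *ᵥ ρ := by
  set B := A.submatrix e e
  set w := B⁻¹ *ᵥ (ρ ∘ e)
  have hBw : B *ᵥ w = ρ ∘ e := by
    rw [mulVec_mulVec, mul_nonsing_inv _ ((isUnit_iff_isUnit_det B).mp (hA.submatrix he).isUnit),
      one_mulVec]
  have key := hA.two_mul_dotProduct_sub_le ρ (extend e w 0)
  rw [extend_zero_dotProduct he, extend_zero_dotProduct_mulVec he, hBw,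
    dotProduct_comm w] at key
  linarith

end Matrix.PosDef

section Bordered

variable {n : ℕ} {R : Matrix (Fin n) (Fin n) ℝ}

lemma brd_submatrix_finSumFinEquiv (a : ℕ) (h : a ≤ n) (j : Fin n) :
    (brd R a h j).submatrix finSumFinEquiv finSumFinEquiv =
      fromBlocks (lead R a h) (replicateCol (Fin 1) (colv R a h j))
        (replicateRow (Fin 1) (colv R a h j)) 1 := by
  ext (k | k) (l | l) <;> simp [brd, lead, colv, Fin.castLE, one_apply, Fin.fin_one_eq_zero]

lemma det_brd (a : ℕ) (h : a ≤ n) (j : Fin n) (hA : IsUnit (lead R a h).det) :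
    (brd R a h j).det =
      (lead R a h).det * (1 - colv R a h j ⬝ᵥ (lead R a h)⁻¹ *ᵥ colv R a h j) := by
  let := invertibleOfIsUnitDet _ hA
  rw [← det_submatrix_equiv_self finSumFinEquiv, brd_submatrix_finSumFinEquiv, det_fromBlocks₁₁]
  congr 1
  rw [det_unique, invOf_eq_nonsing_inv, ← replicateRow_vecMul, replicateRow_mul_replicateCol,
    dotProduct_mulVec]
  rfl

lemma lead_posDef (hR : R.PosDef) (a : ℕ) (h : a ≤ n) : (lead R a h).PosDef :=
  hR.submatrix (Fin.castLE_injective h)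

lemma det_brd_div_det_lead (hR : R.PosDef) (a : ℕ) (h : a ≤ n) (j : Fin n) :
    (brd R a h j).det / (lead R a h).det =
      1 - colv R a h j ⬝ᵥ (lead R a h)⁻¹ *ᵥ colv R a h j := by
  have hA := (lead_posDef hR a h).det_pos
  rw [det_brd a h j (isUnit_iff_ne_zero.mpr hA.ne'), mul_div_cancel_left₀ _ hA.ne']

lemma det_brd_div_det_lead_antitone (hR : R.PosDef) {a b : ℕ} (hab : a ≤ b) (hb : b ≤ n)
    (j : Fin n) :
    (brd R b hb j).det / (lead R b hb).det ≤
      (brd R a (hab.trans hb) j).det / (lead R a (hab.trans hb)).det := by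
  rw [det_brd_div_det_lead hR, det_brd_div_det_lead hR, sub_le_sub_iff_left]
  exact (lead_posDef hR b hb).dotProduct_inv_mulVec_submatrix_le (Fin.castLE_injective hab)
    (colv R b hb j)

lemma det_brd_zero_div_det_lead_zero (hR : R.PosDef) (j : Fin n) :
    (brd R 0 (Nat.zero_le n) j).det / (lead R 0 (Nat.zero_le n)).det = 1 := by
  rw [det_brd_div_det_lead hR]
  simp

lemma brd_self_eq_lead (hR : R.IsHermitian) (hdiag : ∀ k, R k k = 1) (j : Fin n) :
    brd R j j.isLt.le j = lead R (j + 1) j.isLt := by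
  ext k l
  have hlast : ∀ m : Fin (j + 1), ¬ (m : ℕ) < j → Fin.castLE j.isLt m = j := fun m hm =>
    Fin.ext (by simp; omega)
  by_cases hk : (k : ℕ) < j <;> by_cases hl : (l : ℕ) < j <;>
    simp only [brd, lead, of_apply, submatrix_apply, hk, hl, hlast, dif_pos, dif_neg,
      not_false_eq_true]
  · rfl
  · rfl
  · exact hR.apply j _
  · exact (hdiag j).symm

end Bordered

-- `jf` is the paper's `j - 1` and `a` its `i - 1`, both 0-indexed.
theorem stmt7_general {n : ℕ} (R : Matrix (Fin n) (Fin n) ℝ) (hR : R.PosDef)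
    (hdiag : ∀ k, R k k = 1) (jf : Fin n) :
    (∀ (a b : ℕ) (hab : a ≤ b) (hb : b ≤ (jf : ℕ)),
        (brd R b (hb.trans jf.isLt.le) jf).det / (lead R b (hb.trans jf.isLt.le)).det ≤
          (brd R a ((hab.trans hb).trans jf.isLt.le) jf).det /
            (lead R a ((hab.trans hb).trans jf.isLt.le)).det) ∧
    (∀ (a : ℕ) (ha : a ≤ (jf : ℕ)),
        (brd R a (ha.trans jf.isLt.le) jf).det / (lead R a (ha.trans jf.isLt.le)).det ≤ 1) ∧
    (0 < (brd R (jf : ℕ) jf.isLt.le jf).det / (lead R (jf : ℕ) jf.isLt.le).det) := by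
  refine ⟨fun a b hab hb => det_brd_div_det_lead_antitone hR hab _ jf, fun a ha => ?_, ?_⟩
  · rw [← det_brd_zero_div_det_lead_zero hR jf]
    exact det_brd_div_det_lead_antitone hR (Nat.zero_le a) _ jf
  · rw [brd_self_eq_lead hR.isHermitian hdiag]
    exact div_pos (lead_posDef hR _ _).det_pos (lead_posDef hR _ _).det_pos

/-- The second determinant ordering (Eq. (7) of the paper): for fixed column `j`,
the ratios `det(R_{i}^{*j})/det(R_{i−1})` (here `brd R a ⋯ / lead R a ⋯` with
0-indexed `a = i − 1 ≤ jf`) are nonincreasing in `i`, start at `1`, and the last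
one `det(R_j)/det(R_{j−1})` is positive. -/
theorem stmt7 {n : ℕ} (R : Matrix (Fin n) (Fin n) ℝ) (hR : R.PosDef)
    (hdiag : ∀ k, R k k = 1) (jf : Fin n) (hj : 1 ≤ (jf : ℕ)) :
    (∀ (a b : ℕ) (hab : a ≤ b) (hb : b ≤ (jf : ℕ)),
        (brd R b (hb.trans jf.isLt.le) jf).det / (lead R b (hb.trans jf.isLt.le)).det ≤
          (brd R a ((hab.trans hb).trans jf.isLt.le) jf).det /
            (lead R a ((hab.trans hb).trans jf.isLt.le)).det) ∧
    (∀ (a : ℕ) (ha : a ≤ (jf : ℕ)),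
        (brd R a (ha.trans jf.isLt.le) jf).det / (lead R a (ha.trans jf.isLt.le)).det ≤ 1) ∧
    (0 < (brd R (jf : ℕ) jf.isLt.le jf).det / (lead R (jf : ℕ) jf.isLt.le).det) :=
  stmt7_general R hR hdiag jf
end

section
/- Let R be a symmetric positive-definite correlation matrix and define for j > i the quantity D_{ij} = det(R_i^{*j})/det(R_{i−1}) − det(R_{i+1}^{*j})/det(R_i) (with det(R_1^{*j}) = 1, det(R_0) = 1, and R_j^{*j} = R_j). Then the squared semi-partial correlation satisfies ρ_{ij(1,...,i−1)}² = D_{ij}, i.e., (R_{ij} − ρ_i^{*j} R_{i−1}^{−1} ρ_i^T)²/(1 − ρ_i R_{i−1}^{−1} ρ_i^T) = det(R_i^{*j})/det(R_{i−1}) − det(R_{i+1}^{*j})/det(R_i). -/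
open Matrix

/-! Bordering the leading block `A = R_{i-1}` by further indices multiplies its determinant by
the determinant of the Schur complement, whose entries are the partial covariances
`p_{ab} = R_{ab} - ρ^{*a} A⁻¹ (ρ^{*b})ᵀ`. Bordering by one index gives
`det R_i^{*j} = det A · p_{jj}` and `det R_i = det A · p_{ii}`, bordering by two gives
`det R_{i+1}^{*j} = det A · (p_{ii} p_{jj} - p_{ij}²)`, and the claim becomes the identity
`p_{ij}² / p_{ii} = p_{jj} - (p_{ii} p_{jj} - p_{ij}²) / p_{ii}`. -/

theorem Fin.append_append_singleton {α : Type*} {p : ℕ} (f : Fin p → α) (a b : α) :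
    Fin.append (Fin.append f ![a]) ![b] = Fin.append f ![a, b] := by
  rw [Fin.append_assoc, show Fin.append ![a] ![b] = ![a, b] by ext i; fin_cases i <;> rfl]
  rfl

theorem Fin.castLE_succ_eq_append {i n : ℕ} (h : i + 1 ≤ n) :
    Fin.castLE h = Fin.append (Fin.castLE (Nat.le_of_succ_le h)) ![⟨i, h⟩] := by
  ext k
  refine Fin.addCases (fun k => ?_) (fun k => ?_) k <;> simp

namespace Matrix

variable {ι α : Type*} {p q : ℕ}

theorem submatrix_sumElim (M : Matrix ι ι α) (f : Fin p → ι) (e : Fin q → ι) :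
    M.submatrix (Sum.elim f e) (Sum.elim f e) =
      fromBlocks (M.submatrix f f) (M.submatrix f e) (M.submatrix e f) (M.submatrix e e) := by
  ext (i | i) (j | j) <;> rfl

theorem det_submatrix_append [CommRing α] (M : Matrix ι ι α) (f : Fin p → ι)
    (e : Fin q → ι) [Invertible (M.submatrix f f)] :
    (M.submatrix (Fin.append f e) (Fin.append f e)).det =
      (M.submatrix f f).det *
        (M.submatrix e e - M.submatrix e f * (M.submatrix f f)⁻¹ * M.submatrix f e).det := by
  have happend : Fin.append f e = Sum.elim f e ∘ finSumFinEquiv.symm := by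
    ext i
    refine Fin.addCases (fun k => ?_) (fun k => ?_) i <;> simp
  rw [happend, ← submatrix_submatrix, det_submatrix_equiv_self, submatrix_sumElim,
    det_fromBlocks₁₁, invOf_eq_nonsing_inv]

end Matrix

section PartialCovariance

variable {n : ℕ}

noncomputable def partialCov (R : Matrix (Fin n) (Fin n) ℝ) (i : ℕ) (h : i ≤ n) (a b : Fin n) :
    ℝ :=
  R a b - colv R i h a ⬝ᵥ (lead R i h)⁻¹ *ᵥ colv R i h b

variable {R : Matrix (Fin n) (Fin n) ℝ}

theorem partialCov_comm (hsymm : R.IsSymm) {i : ℕ} (h : i ≤ n) (a b : Fin n) :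
    partialCov R i h a b = partialCov R i h b a := by
  have hlead : (lead R i h)ᵀ = lead R i h := (hsymm.submatrix (Fin.castLE h)).eq
  have hinv : ((lead R i h)⁻¹)ᵀ = (lead R i h)⁻¹ := by rw [transpose_nonsing_inv, hlead]
  rw [partialCov, partialCov, hsymm.apply, dotProduct_mulVec, ← mulVec_transpose, hinv,
    dotProduct_comm]

theorem schurComplement_eq_partialCov (hsymm : R.IsSymm) {i q : ℕ} (h : i ≤ n)
    (e : Fin q → Fin n) :
    R.submatrix e e - R.submatrix e (Fin.castLE h) * (lead R i h)⁻¹ *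
        R.submatrix (Fin.castLE h) e = of fun x y => partialCov R i h (e x) (e y) := by
  ext x y
  have hrow : (fun k => R (e x) (Fin.castLE h k)) = colv R i h (e x) := by
    ext k; exact hsymm.apply _ _
  rw [Matrix.sub_apply, Matrix.mul_assoc, mul_apply', of_apply, partialCov, ← hrow]
  rfl

theorem det_submatrix_castLE_append_single (hsymm : R.IsSymm) {i : ℕ} (h : i ≤ n)
    [Invertible (lead R i h)] (a : Fin n) :
    (R.submatrix (Fin.append (Fin.castLE h) ![a]) (Fin.append (Fin.castLE h) ![a])).det =
      (lead R i h).det * partialCov R i h a a := by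
  have : Invertible (R.submatrix (Fin.castLE h) (Fin.castLE h)) := ‹Invertible (lead R i h)›
  rw [det_submatrix_append,
    show R.submatrix (Fin.castLE h) (Fin.castLE h) = lead R i h from rfl,
    schurComplement_eq_partialCov hsymm h, det_fin_one, of_apply]
  rfl

theorem det_submatrix_castLE_append_pair (hsymm : R.IsSymm) {i : ℕ} (h : i ≤ n)
    [Invertible (lead R i h)] (a b : Fin n) :
    (R.submatrix (Fin.append (Fin.castLE h) ![a, b]) (Fin.append (Fin.castLE h) ![a, b])).det =
      (lead R i h).det * (partialCov R i h a a * partialCov R i h b b -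
        partialCov R i h a b * partialCov R i h b a) := by
  have : Invertible (R.submatrix (Fin.castLE h) (Fin.castLE h)) := ‹Invertible (lead R i h)›
  rw [det_submatrix_append,
    show R.submatrix (Fin.castLE h) (Fin.castLE h) = lead R i h from rfl,
    schurComplement_eq_partialCov hsymm h, det_fin_two]
  rfl

theorem brd_eq_submatrix (hsymm : R.IsSymm) (hdiag : ∀ k, R k k = 1) {i : ℕ} (h : i ≤ n)
    (j : Fin n) :
    brd R i h j =
      R.submatrix (Fin.append (Fin.castLE h) ![j]) (Fin.append (Fin.castLE h) ![j]) := by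
  ext k l
  refine Fin.addCases (fun k => ?_) (fun k => ?_) k <;>
    refine Fin.addCases (fun l => ?_) (fun l => ?_) l <;>
    simp [brd, hdiag, hsymm.apply, Fin.castLE]

theorem det_lead_succ (hsymm : R.IsSymm) {i : ℕ} (h : i + 1 ≤ n)
    [Invertible (lead R i (Nat.le_of_succ_le h))] :
    (lead R (i + 1) h).det = (lead R i (Nat.le_of_succ_le h)).det *
      partialCov R i (Nat.le_of_succ_le h) ⟨i, h⟩ ⟨i, h⟩ := by
  rw [lead, Fin.castLE_succ_eq_append, det_submatrix_castLE_append_single hsymm]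

theorem det_brd_s19 (hsymm : R.IsSymm) (hdiag : ∀ k, R k k = 1) {i : ℕ} (h : i ≤ n)
    [Invertible (lead R i h)] (j : Fin n) :
    (brd R i h j).det = (lead R i h).det * partialCov R i h j j := by
  rw [brd_eq_submatrix hsymm hdiag, det_submatrix_castLE_append_single hsymm]

theorem det_brd_succ (hsymm : R.IsSymm) (hdiag : ∀ k, R k k = 1) {i : ℕ} (h : i + 1 ≤ n)
    [Invertible (lead R i (Nat.le_of_succ_le h))] (j : Fin n) :
    (brd R (i + 1) h j).det = (lead R i (Nat.le_of_succ_le h)).det *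
      (partialCov R i (Nat.le_of_succ_le h) ⟨i, h⟩ ⟨i, h⟩ *
          partialCov R i (Nat.le_of_succ_le h) j j -
        partialCov R i (Nat.le_of_succ_le h) ⟨i, h⟩ j *
          partialCov R i (Nat.le_of_succ_le h) j ⟨i, h⟩) := by
  rw [brd_eq_submatrix hsymm hdiag, Fin.castLE_succ_eq_append, Fin.append_append_singleton,
    det_submatrix_castLE_append_pair hsymm]

end PartialCovariance

-- The paper's index `i` is `m + 1`, so its `R_i^{*j}` is `brd R m`.
theorem stmt19_general {n : ℕ} (R : Matrix (Fin n) (Fin n) ℝ) (hR : R.PosDef)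
    (hdiag : ∀ k, R k k = 1) (m : ℕ) (hm : m + 1 ≤ n) (jf : Fin n) :
    (R ⟨m, hm⟩ jf - colv R m (Nat.le_of_succ_le hm) jf ⬝ᵥ
          (lead R m (Nat.le_of_succ_le hm))⁻¹ *ᵥ
            colv R m (Nat.le_of_succ_le hm) ⟨m, hm⟩) ^ 2 /
        (1 - colv R m (Nat.le_of_succ_le hm) ⟨m, hm⟩ ⬝ᵥ
            (lead R m (Nat.le_of_succ_le hm))⁻¹ *ᵥ
              colv R m (Nat.le_of_succ_le hm) ⟨m, hm⟩) =
      (brd R m (Nat.le_of_succ_le hm) jf).det / (lead R m (Nat.le_of_succ_le hm)).det -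
        (brd R (m + 1) hm jf).det / (lead R (m + 1) hm).det := by
  have h0 : m ≤ n := Nat.le_of_succ_le hm
  have hsymm : R.IsSymm := isHermitian_iff_isSymm.mp hR.isHermitian
  have hA : (lead R m h0).PosDef := hR.submatrix (Fin.castLE_injective h0)
  have := hA.isUnit.invertible
  have hpos : 0 < partialCov R m h0 ⟨m, hm⟩ ⟨m, hm⟩ := by
    have : 0 < (lead R (m + 1) hm).det := (hR.submatrix (Fin.castLE_injective hm)).det_pos
    rw [det_lead_succ hsymm hm] at this
    exact pos_of_mul_pos_right this hA.det_pos.le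
  have hnum : R ⟨m, hm⟩ jf - colv R m h0 jf ⬝ᵥ (lead R m h0)⁻¹ *ᵥ colv R m h0 ⟨m, hm⟩ =
      partialCov R m h0 jf ⟨m, hm⟩ := by
    rw [partialCov, hsymm.apply jf ⟨m, hm⟩]
  have hden : 1 - colv R m h0 ⟨m, hm⟩ ⬝ᵥ (lead R m h0)⁻¹ *ᵥ colv R m h0 ⟨m, hm⟩ =
      partialCov R m h0 ⟨m, hm⟩ ⟨m, hm⟩ := by
    rw [partialCov, hdiag]
  rw [hnum, hden, det_brd_s19 hsymm hdiag, det_lead_succ hsymm, det_brd_succ hsymm hdiag,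
    partialCov_comm hsymm h0 ⟨m, hm⟩ jf]
  field_simp [hA.det_pos.ne']
  ring

/-- The squared semi-partial correlation equals the difference of successive
determinant ratios: `(R_{ij} − ρ_i^{*j} R_{i−1}⁻¹ ρ_iᵀ)²/(1 − ρ_i R_{i−1}⁻¹ ρ_iᵀ)
 = det(R_i^{*j})/det(R_{i−1}) − det(R_{i+1}^{*j})/det(R_i)`.
Here `m = i − 1 ≥ 0` is 0-indexed and the paper's `R_i^{*j}` is `brd R m`. -/
theorem stmt19 {n : ℕ} (R : Matrix (Fin n) (Fin n) ℝ) (hR : R.PosDef)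
    (hdiag : ∀ k, R k k = 1) (m : ℕ) (hm : m + 1 ≤ n) (jf : Fin n)
    (hj : m + 1 ≤ (jf : ℕ)) :
    (R ⟨m, hm⟩ jf - colv R m (Nat.le_of_succ_le hm) jf ⬝ᵥ
          (lead R m (Nat.le_of_succ_le hm))⁻¹ *ᵥ
            colv R m (Nat.le_of_succ_le hm) ⟨m, hm⟩) ^ 2 /
        (1 - colv R m (Nat.le_of_succ_le hm) ⟨m, hm⟩ ⬝ᵥ
            (lead R m (Nat.le_of_succ_le hm))⁻¹ *ᵥ
              colv R m (Nat.le_of_succ_le hm) ⟨m, hm⟩) =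
      (brd R m (Nat.le_of_succ_le hm) jf).det / (lead R m (Nat.le_of_succ_le hm)).det -
        (brd R (m + 1) hm jf).det / (lead R (m + 1) hm).det :=
  stmt19_general R hR hdiag m hm jf
end
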